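/- arXiv:math/9612223 — 2 statements merged into one kernel-verified Lean document; each statement's English description precedes it below -/
import Mathlib

section
/- The Erdős measure assigns equal mass to the three intervals determined by λ⁻² and λ⁻¹: μ((0, λ⁻²)) = μ((λ⁻², λ⁻¹)) = μ((λ⁻¹, 1)) = 1/3. -/
open MeasureTheory Filter Topology
open scoped ENNReal

/-- The golden ratio λ = (1+√5)/2. -/
noncomputable def gold : ℝ := (1 + Real.sqrt 5) / 2

/-- `p` is the Bernoulli (1/2,1/2) product measure on `{0,1}^ℕ`, characterized by its
values on cylinder sets. -/
def IsCoinMeasure (p : Measure (ℕ → Bool)) : Prop :=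
  ∀ (s : Finset ℕ) (b : ℕ → Bool), p {ε | ∀ i ∈ s, ε i = b i} = (2 : ℝ≥0∞)⁻¹ ^ s.card

lemma gold_gt_one : 1 < gold := by
  have h5 : (1:ℝ) < Real.sqrt 5 := by
    rw [show (1:ℝ) = Real.sqrt 1 by simp]
    exact Real.sqrt_lt_sqrt (by norm_num) (by norm_num)
  unfold gold; linarith

lemma beta_pos : 0 < gold⁻¹ := inv_pos.mpr (by linarith [gold_gt_one])
lemma beta_lt_one : gold⁻¹ < 1 := inv_lt_one_of_one_lt₀ gold_gt_one
lemma betap (n : ℕ) : 0 < gold⁻¹ ^ n := pow_pos beta_pos n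
lemma beta_eq : gold⁻¹ ^ 2 + gold⁻¹ = 1 := by
  have hg : gold ^ 2 = gold + 1 := by
    have h5 : Real.sqrt 5 ^ 2 = 5 := Real.sq_sqrt (by norm_num)
    unfold gold; ring_nf; nlinarith [h5]
  have hpos : gold ≠ 0 := by have := gold_gt_one; linarith
  field_simp
  nlinarith [hg]

/-- π(ε) = Σ_{k=1}^∞ ε_k λ^{-k-1} (indices shifted so that `ε k` is `ε_{k+1}`). -/
noncomputable def piMap (ε : ℕ → Bool) : ℝ := ∑' k : ℕ, if ε k then gold⁻¹ ^ (k + 2) else 0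

lemma geom_summable : Summable (fun k : ℕ => gold⁻¹ ^ (k + 2)) := by
  have h := (summable_geometric_of_lt_one beta_pos.le beta_lt_one).mul_left (gold⁻¹ ^ 2)
  refine h.congr (fun k => ?_)
  rw [pow_add, mul_comm]

lemma geom_tsum : ∑' k : ℕ, gold⁻¹ ^ (k + 2) = 1 := by
  have h : ∑' k : ℕ, gold⁻¹ ^ (k + 2) = (∑' k : ℕ, gold⁻¹ ^ k) * gold⁻¹ ^ 2 := by
    rw [← tsum_mul_right]; congr 1; ext k; rw [pow_add]
  rw [h, tsum_geometric_of_lt_one beta_pos.le beta_lt_one]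
  have h2 : (1 : ℝ) - gold⁻¹ = gold⁻¹ ^ 2 := by have := beta_eq; linarith
  rw [h2]
  have hne : gold ^ 2 ≠ 0 := by have := gold_gt_one; positivity
  field_simp
  exact div_self (by have := gold_gt_one; linarith)

lemma piMap_term_nonneg (ε : ℕ → Bool) (k : ℕ) :
    (0:ℝ) ≤ (if ε k then gold⁻¹ ^ (k + 2) else 0) := by
  split
  · exact (betap _).le
  · exact le_refl 0

lemma piMap_term_le (ε : ℕ → Bool) (k : ℕ) :
    (if ε k then gold⁻¹ ^ (k + 2) else 0) ≤ gold⁻¹ ^ (k + 2) := by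
  split
  · exact le_refl _
  · exact (betap _).le

lemma piMap_summable (ε : ℕ → Bool) :
    Summable (fun k => if ε k then gold⁻¹ ^ (k + 2) else 0) :=
  Summable.of_nonneg_of_le (piMap_term_nonneg ε) (piMap_term_le ε) geom_summable

lemma piMap_nonneg (ε : ℕ → Bool) : 0 ≤ piMap ε :=
  tsum_nonneg (piMap_term_nonneg ε)

lemma piMap_le_one (ε : ℕ → Bool) : piMap ε ≤ 1 := by
  rw [show (1:ℝ) = ∑' k : ℕ, gold⁻¹ ^ (k + 2) from geom_tsum.symm]
  exact Summable.tsum_le_tsum (piMap_term_le ε) (piMap_summable ε) geom_summable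

lemma piMap_lt_one (ε : ℕ → Bool) (k : ℕ) (hk : ε k = false) : piMap ε < 1 := by
  rw [show (1:ℝ) = ∑' k : ℕ, gold⁻¹ ^ (k + 2) from geom_tsum.symm]
  refine Summable.tsum_lt_tsum (i := k) (piMap_term_le ε) ?_ (piMap_summable ε) geom_summable
  rw [hk]; simpa using betap (k + 2)

lemma piMap_pos (ε : ℕ → Bool) (k : ℕ) (hk : ε k = true) : 0 < piMap ε := by
  have h := Summable.le_tsum (piMap_summable ε) k (fun j _ => piMap_term_nonneg ε j)
  rw [hk, if_pos rfl] at h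
  exact lt_of_lt_of_le (betap (k + 2)) h

/-- shift -/
def shift (ε : ℕ → Bool) (k : ℕ) : Bool := ε (k + 1)

lemma shift_measurable : Measurable shift := by
  apply measurable_pi_iff.mpr
  intro k
  exact measurable_pi_apply (k + 1)

lemma piMap_decomp (ε : ℕ → Bool) :
    piMap ε = (if ε 0 then gold⁻¹ ^ 2 else 0) + gold⁻¹ * piMap (shift ε) := by
  unfold piMap
  rw [Summable.tsum_eq_zero_add (piMap_summable ε)]
  congr 1
  rw [← tsum_mul_left]
  congr 1
  ext k
  unfold shift
  split
  · ring
  · ring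

lemma piMap_measurable : Measurable piMap := by
  have h : ∀ ε, Tendsto (fun n => ∑ k ∈ Finset.range n, if ε k then gold⁻¹ ^ (k + 2) else 0)
      atTop (𝓝 (piMap ε)) := fun ε => (piMap_summable ε).hasSum.tendsto_sum_nat
  refine measurable_of_tendsto_metrizable (fun n => ?_) (tendsto_pi_nhds.mpr h)
  apply Finset.measurable_sum
  intro k _
  have : Measurable fun ε : ℕ → Bool => ε k := measurable_pi_apply k
  exact Measurable.ite (this (MeasurableSet.singleton true)) measurable_const measurable_const

def Cyl : Set (Set (ℕ → Bool)) :=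
  {S | ∃ (s : Finset ℕ) (b : ℕ → Bool), S = {ε | ∀ i ∈ s, ε i = b i}}

lemma isPiSystem_Cyl : IsPiSystem Cyl := by
  rintro S ⟨s, b, rfl⟩ T ⟨t, c, rfl⟩ hne
  obtain ⟨ε, hεb, hεc⟩ := hne
  refine ⟨s ∪ t, fun i => if i ∈ s then b i else c i, ?_⟩
  ext ε'
  simp only [Set.mem_inter_iff, Set.mem_setOf_eq, Finset.mem_union]
  constructor
  · rintro ⟨h1, h2⟩ i hi
    rcases hi with hi | hi
    · rw [if_pos hi]; exact h1 i hi
    · by_cases hs : i ∈ s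
      · rw [if_pos hs]; exact h1 i hs
      · rw [if_neg hs]; exact h2 i hi
  · intro h
    constructor
    · intro i hi
      have := h i (Or.inl hi); rwa [if_pos hi] at this
    · intro i hi
      have := h i (Or.inr hi)
      by_cases hs : i ∈ s
      · rw [if_pos hs] at this
        rw [this, ← hεb i hs, hεc i hi]
      · rwa [if_neg hs] at this

lemma cyl_measurableSet {S : Set (ℕ → Bool)} (hS : S ∈ Cyl) : MeasurableSet S := by
  obtain ⟨s, b, rfl⟩ := hS
  have : {ε : ℕ → Bool | ∀ i ∈ s, ε i = b i} = ⋂ i ∈ s, {ε : ℕ → Bool | ε i = b i} := by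
    ext ε; simp
  rw [this]
  refine MeasurableSet.biInter s.countable_toSet (fun i _ => ?_)
  have h : {ε : ℕ → Bool | ε i = b i} = (fun ε : ℕ → Bool => ε i) ⁻¹' {b i} := rfl
  rw [h]
  exact measurable_pi_apply i (MeasurableSet.singleton (b i))

lemma generateFrom_Cyl : MeasurableSpace.pi = MeasurableSpace.generateFrom Cyl := by
  apply le_antisymm
  · rw [MeasurableSpace.pi]
    refine iSup_le fun i => ?_
    refine Measurable.comap_le (m₁ := MeasurableSpace.generateFrom Cyl) ?_
    refine @measurable_to_countable' Bool (ℕ → Bool) _ _ (MeasurableSpace.generateFrom Cyl)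
      (fun ε => ε i) (fun y => ?_)
    refine MeasurableSpace.measurableSet_generateFrom ⟨{i}, fun _ => y, ?_⟩
    ext ε; simp [Set.mem_preimage]
  · rw [MeasurableSpace.generateFrom_le_iff]
    intro S hS
    exact cyl_measurableSet hS

section coin
variable {p : Measure (ℕ → Bool)} (hp : IsCoinMeasure p)

include hp

lemma coin_univ : p Set.univ = 1 := by
  have h := hp ∅ (fun _ => true)
  simpa using h

lemma coin_zero (b : Bool) : p {ε | ε 0 = b} = 2⁻¹ := by
  have h := hp {0} (fun _ => b)
  simpa using h

omit hp in
lemma zeroSet_measurable (b : Bool) : MeasurableSet {ε : ℕ → Bool | ε 0 = b} := by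
  exact cyl_measurableSet ⟨{0}, fun _ => b, by ext ε; simp⟩

lemma coin_key (b : Bool) (A : Set (ℕ → Bool)) (hA : MeasurableSet A) :
    p (shift ⁻¹' A ∩ {ε | ε 0 = b}) = 2⁻¹ * p A := by
  have hfin : IsFiniteMeasure p := ⟨by rw [coin_univ hp]; exact ENNReal.one_lt_top⟩
  set ν : Measure (ℕ → Bool) := (2 : ℝ≥0∞) • ((p.restrict {ε | ε 0 = b}).map shift) with hν
  have hmapped : ∀ B : Set (ℕ → Bool), MeasurableSet B →
      ν B = 2 * p (shift ⁻¹' B ∩ {ε | ε 0 = b}) := by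
    intro B hB
    rw [hν]
    simp only [Measure.smul_apply, smul_eq_mul]
    rw [Measure.map_apply shift_measurable hB,
      Measure.restrict_apply (shift_measurable hB)]
  have hνp : ν = p := by
    have hfinν : IsFiniteMeasure ν := by
      constructor
      rw [hmapped Set.univ MeasurableSet.univ]
      simp only [Set.preimage_univ, Set.univ_inter]
      rw [coin_zero hp b]
      rw [ENNReal.mul_inv_cancel two_ne_zero ENNReal.ofNat_ne_top]
      exact ENNReal.one_lt_top
    refine MeasureTheory.ext_of_generate_finite Cyl generateFrom_Cyl isPiSystem_Cyl ?_ ?_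
    · rintro S ⟨s, c, rfl⟩
      rw [hmapped _ (cyl_measurableSet ⟨s, c, rfl⟩), hp s c]
      have hset : shift ⁻¹' {ε | ∀ i ∈ s, ε i = c i} ∩ {ε | ε 0 = b} =
          {ε | ∀ j ∈ insert 0 (s.image (· + 1)), ε j = (fun j => if j = 0 then b else c (j - 1)) j} := by
        ext ε
        simp only [Set.mem_inter_iff, Set.mem_preimage, Set.mem_setOf_eq, Finset.mem_insert,
          Finset.mem_image]
        constructor
        · rintro ⟨h1, h2⟩ j hj
          rcases hj with rfl | ⟨i, hi, rfl⟩
          · simpa using h2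
          · simpa [shift] using h1 i hi
        · intro h
          constructor
          · intro i hi
            have := h (i + 1) (Or.inr ⟨i, hi, rfl⟩)
            simpa [shift] using this
          · simpa using h 0 (Or.inl rfl)
      rw [hset, hp]
      have hcard : (insert 0 (s.image (· + 1))).card = s.card + 1 := by
        rw [Finset.card_insert_of_notMem (by simp), Finset.card_image_of_injective _
          (fun a b hab => by omega)]
      rw [hcard, pow_succ, mul_comm (2 : ℝ≥0∞), mul_assoc,
        ENNReal.inv_mul_cancel two_ne_zero ENNReal.ofNat_ne_top, mul_one]
    · rw [hmapped Set.univ MeasurableSet.univ]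
      simp only [Set.preimage_univ, Set.univ_inter]
      rw [coin_zero hp b, coin_univ hp,
        ENNReal.mul_inv_cancel two_ne_zero ENNReal.ofNat_ne_top]
  have := hmapped A hA
  rw [hνp] at this
  rw [this, ← mul_assoc, ENNReal.inv_mul_cancel two_ne_zero ENNReal.ofNat_ne_top, one_mul]

end coin

/-- The Erdős measure: the pushforward of the coin measure `p` under `piMap`. -/
noncomputable def erdosOf (p : Measure (ℕ → Bool)) : Measure ℝ := p.map piMap

lemma affine_measurable : Measurable fun x : ℝ => gold⁻¹ ^ 2 + gold⁻¹ * x :=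
  (measurable_id.const_mul _).const_add _

lemma mul_measurable : Measurable fun x : ℝ => gold⁻¹ * x :=
  measurable_id.const_mul _

lemma erdos_funEq {p : Measure (ℕ → Bool)} (hp : IsCoinMeasure p)
    (E : Set ℝ) (hE : MeasurableSet E) :
    erdosOf p E = 2⁻¹ * erdosOf p ((fun x => gold⁻¹ * x) ⁻¹' E)
      + 2⁻¹ * erdosOf p ((fun x => gold⁻¹ ^ 2 + gold⁻¹ * x) ⁻¹' E) := by
  have hπ := piMap_measurable
  simp only [erdosOf]
  rw [Measure.map_apply hπ hE,
    Measure.map_apply hπ (mul_measurable hE), Measure.map_apply hπ (affine_measurable hE)]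
  have hsplit : p (piMap ⁻¹' E) =
      p (piMap ⁻¹' E ∩ {ε | ε 0 = false}) + p (piMap ⁻¹' E ∩ {ε | ε 0 = true}) := by
    have h := measure_inter_add_diff (μ := p) (piMap ⁻¹' E) (zeroSet_measurable true)
    have hd : piMap ⁻¹' E \ {ε | ε 0 = true} = piMap ⁻¹' E ∩ {ε | ε 0 = false} := by
      ext ε; simp [Set.mem_diff, Set.mem_inter_iff]
    rw [hd] at h
    rw [← h, add_comm]
  rw [hsplit]
  have hf : piMap ⁻¹' E ∩ {ε | ε 0 = false} =
      shift ⁻¹' (piMap ⁻¹' ((fun x => gold⁻¹ * x) ⁻¹' E)) ∩ {ε | ε 0 = false} := by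
    ext ε
    simp only [Set.mem_inter_iff, Set.mem_preimage, Set.mem_setOf_eq]
    constructor
    · rintro ⟨h1, h2⟩
      refine ⟨?_, h2⟩
      have := piMap_decomp ε
      rw [h2, if_neg (by simp), zero_add] at this
      rwa [← this]
    · rintro ⟨h1, h2⟩
      refine ⟨?_, h2⟩
      have := piMap_decomp ε
      rw [h2, if_neg (by simp), zero_add] at this
      rwa [this]
  have ht : piMap ⁻¹' E ∩ {ε | ε 0 = true} =
      shift ⁻¹' (piMap ⁻¹' ((fun x => gold⁻¹ ^ 2 + gold⁻¹ * x) ⁻¹' E)) ∩ {ε | ε 0 = true} := by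
    ext ε
    simp only [Set.mem_inter_iff, Set.mem_preimage, Set.mem_setOf_eq]
    constructor
    · rintro ⟨h1, h2⟩
      refine ⟨?_, h2⟩
      have := piMap_decomp ε
      rw [h2, if_pos rfl] at this
      rwa [← this]
    · rintro ⟨h1, h2⟩
      refine ⟨?_, h2⟩
      have := piMap_decomp ε
      rw [h2, if_pos rfl] at this
      rwa [this]
  rw [hf, ht, coin_key hp false _ (hπ (mul_measurable hE)),
    coin_key hp true _ (hπ (affine_measurable hE))]

lemma erdos_outside {p : Measure (ℕ → Bool)} (E : Set ℝ) (hE : MeasurableSet E)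
    (h : ∀ x ∈ E, x < 0 ∨ 1 < x) : erdosOf p E = 0 := by
  rw [erdosOf, Measure.map_apply piMap_measurable hE]
  have : piMap ⁻¹' E = ∅ := by
    ext ε
    simp only [Set.mem_preimage, Set.mem_empty_iff_false, iff_false]
    intro hmem
    rcases h _ hmem with h' | h'
    · exact absurd (piMap_nonneg ε) (not_le.mpr h')
    · exact absurd (piMap_le_one ε) (not_le.mpr h')
  rw [this, measure_empty]

lemma erdos_const {p : Measure (ℕ → Bool)} (hp : IsCoinMeasure p) (b : Bool)
    (hsub : piMap ⁻¹' {if b then 1 else 0} ⊆ {ε | ∀ k, ε k = b}) :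
    erdosOf p {if b then (1:ℝ) else 0} = 0 := by
  rw [erdosOf, Measure.map_apply piMap_measurable (measurableSet_singleton _)]
  by_contra hne
  obtain ⟨n, hn⟩ := ENNReal.exists_inv_two_pow_lt hne
  have hle : p (piMap ⁻¹' {if b then (1:ℝ) else 0}) ≤ 2⁻¹ ^ n := by
    have hsub2 : piMap ⁻¹' {if b then (1:ℝ) else 0} ⊆
        {ε | ∀ i ∈ Finset.range n, ε i = (fun _ => b) i} := by
      intro ε hε i _
      exact hsub hε i
    calc p (piMap ⁻¹' {if b then (1:ℝ) else 0}) ≤ p {ε | ∀ i ∈ Finset.range n, ε i = (fun _ => b) i} :=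
          measure_mono hsub2
      _ = 2⁻¹ ^ (Finset.range n).card := hp (Finset.range n) (fun _ => b)
      _ = 2⁻¹ ^ n := by rw [Finset.card_range]
  exact absurd hle (not_le.mpr hn)

lemma erdos_zero {p : Measure (ℕ → Bool)} (hp : IsCoinMeasure p) : erdosOf p {(0:ℝ)} = 0 := by
  have := erdos_const hp false ?_
  · simpa using this
  · intro ε hε k
    simp only [Set.mem_preimage, if_neg (by simp : ¬(false = true)), Set.mem_singleton_iff] at hε
    by_contra hk
    have : ε k = true := by revert hk; cases ε k <;> simp
    exact absurd hε (ne_of_gt (piMap_pos ε k this))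

lemma erdos_one {p : Measure (ℕ → Bool)} (hp : IsCoinMeasure p) : erdosOf p {(1:ℝ)} = 0 := by
  have := erdos_const hp true ?_
  · simpa using this
  · intro ε hε k
    simp only [Set.mem_preimage, if_pos rfl, Set.mem_singleton_iff] at hε
    by_contra hk
    have : ε k = false := by revert hk; cases ε k <;> simp
    exact absurd hε (ne_of_lt (piMap_lt_one ε k this))

lemma tri_split (μ : Measure ℝ) {u v w : ℝ} (h1 : u < v) (h2 : v < w) :
    μ (Set.Ioo u w) = μ (Set.Ioo u v) + μ {v} + μ (Set.Ioo v w) := by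
  have e1 : Set.Ioo u w = Set.Ioo u v ∪ Set.Ico v w := (Set.Ioo_union_Ico_eq_Ioo h1 h2.le).symm
  have d1 : Disjoint (Set.Ioo u v) (Set.Ico v w) := by
    refine Set.disjoint_left.mpr fun x hx hx' => ?_
    exact absurd hx.2 (not_lt.mpr hx'.1)
  have e2 : Set.Ico v w = {v} ∪ Set.Ioo v w := by
    rw [← Set.Ioo_insert_left h2, Set.insert_eq]
  have d2 : Disjoint ({v} : Set ℝ) (Set.Ioo v w) := by
    refine Set.disjoint_left.mpr fun x hx hx' => ?_
    rw [Set.mem_singleton_iff] at hx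
    exact absurd hx'.1 (by rw [hx]; exact lt_irrefl v)
  rw [e1, measure_union d1 measurableSet_Ico, e2, measure_union d2 measurableSet_Ioo, add_assoc]

lemma pf1 : (fun x : ℝ => gold⁻¹ * x) ⁻¹' Set.Ioo 0 (gold⁻¹ ^ 2) = Set.Ioo 0 gold⁻¹ := by
  have hb := beta_pos
  ext x
  simp only [Set.mem_preimage, Set.mem_Ioo]
  constructor
  · rintro ⟨h2, h3⟩; exact ⟨by nlinarith, by nlinarith⟩
  · rintro ⟨h2, h3⟩; exact ⟨by nlinarith, by nlinarith⟩

lemma pf2 : (fun x : ℝ => gold⁻¹ * x) ⁻¹' {gold⁻¹ ^ 2} = {gold⁻¹} := by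
  have hb := beta_pos
  ext x
  simp only [Set.mem_preimage, Set.mem_singleton_iff]
  constructor
  · intro h; nlinarith
  · intro h; nlinarith

lemma pf3 : (fun x : ℝ => gold⁻¹ * x) ⁻¹' Set.Ioo (gold⁻¹ ^ 2) gold⁻¹ = Set.Ioo gold⁻¹ 1 := by
  have hb := beta_pos
  ext x
  simp only [Set.mem_preimage, Set.mem_Ioo]
  constructor
  · rintro ⟨h2, h3⟩; exact ⟨by nlinarith, by nlinarith⟩
  · rintro ⟨h2, h3⟩; exact ⟨by nlinarith, by nlinarith⟩

lemma pf4 : (fun x : ℝ => gold⁻¹ * x) ⁻¹' {gold⁻¹} = {(1:ℝ)} := by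
  have hb := beta_pos
  ext x
  simp only [Set.mem_preimage, Set.mem_singleton_iff]
  constructor
  · intro h; nlinarith
  · intro h; nlinarith

lemma pf5 : (fun x : ℝ => gold⁻¹ * x) ⁻¹' Set.Ioo gold⁻¹ 1 ⊆ {x : ℝ | 1 < x} := by
  have hb := beta_pos
  have hb1 := beta_lt_one
  intro x hx
  simp only [Set.mem_preimage, Set.mem_Ioo] at hx
  simp only [Set.mem_setOf_eq]
  nlinarith [hx.1]

lemma pg1 : (fun x : ℝ => gold⁻¹ ^ 2 + gold⁻¹ * x) ⁻¹' Set.Ioo 0 (gold⁻¹ ^ 2) ⊆ {x : ℝ | x < 0} := by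
  have hb := beta_pos
  intro x hx
  simp only [Set.mem_preimage, Set.mem_Ioo] at hx
  simp only [Set.mem_setOf_eq]
  nlinarith [hx.2]

lemma pg2 : (fun x : ℝ => gold⁻¹ ^ 2 + gold⁻¹ * x) ⁻¹' {gold⁻¹ ^ 2} = {(0:ℝ)} := by
  have hb := beta_pos
  ext x
  simp only [Set.mem_preimage, Set.mem_singleton_iff]
  constructor
  · intro h; nlinarith
  · intro h; nlinarith

lemma pg3 : (fun x : ℝ => gold⁻¹ ^ 2 + gold⁻¹ * x) ⁻¹' Set.Ioo (gold⁻¹ ^ 2) gold⁻¹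
    = Set.Ioo 0 (gold⁻¹ ^ 2) := by
  have hb := beta_pos
  have hbe := beta_eq
  ext x
  simp only [Set.mem_preimage, Set.mem_Ioo]
  constructor
  · rintro ⟨h2, h3⟩; exact ⟨by nlinarith, by nlinarith⟩
  · rintro ⟨h2, h3⟩; exact ⟨by nlinarith, by nlinarith⟩

lemma pg4 : (fun x : ℝ => gold⁻¹ ^ 2 + gold⁻¹ * x) ⁻¹' {gold⁻¹} = {gold⁻¹ ^ 2} := by
  have hb := beta_pos
  have hbe := beta_eq
  ext x
  simp only [Set.mem_preimage, Set.mem_singleton_iff]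
  constructor
  · intro h; nlinarith
  · intro h; nlinarith

lemma pg5 : (fun x : ℝ => gold⁻¹ ^ 2 + gold⁻¹ * x) ⁻¹' Set.Ioo gold⁻¹ 1
    = Set.Ioo (gold⁻¹ ^ 2) 1 := by
  have hb := beta_pos
  have hbe := beta_eq
  ext x
  simp only [Set.mem_preimage, Set.mem_Ioo]
  constructor
  · rintro ⟨h2, h3⟩; exact ⟨by nlinarith, by nlinarith⟩
  · rintro ⟨h2, h3⟩; exact ⟨by nlinarith, by nlinarith⟩

/-- The Erdős measure assigns mass 1/3 to each of the intervals
`(0, λ⁻²)`, `(λ⁻², λ⁻¹)`, `(λ⁻¹, 1)`. -/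
theorem erdos_thirds (p : Measure (ℕ → Bool)) (hp : IsCoinMeasure p) :
    erdosOf p (Set.Ioo 0 (gold⁻¹ ^ 2)) = 3⁻¹ ∧
    erdosOf p (Set.Ioo (gold⁻¹ ^ 2) gold⁻¹) = 3⁻¹ ∧
    erdosOf p (Set.Ioo gold⁻¹ 1) = 3⁻¹ := by
  have hb := beta_pos
  have hb1 := beta_lt_one
  have hb2pos : (0:ℝ) < gold⁻¹ ^ 2 := betap 2
  have hb2b : gold⁻¹ ^ 2 < gold⁻¹ := by nlinarith
  set μ := erdosOf p with hμ
  have hfin : ∀ S : Set ℝ, μ S ≠ ⊤ := by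
    intro S
    have huniv : μ Set.univ = 1 := by
      rw [hμ, erdosOf, Measure.map_apply piMap_measurable MeasurableSet.univ,
        Set.preimage_univ, coin_univ hp]
    exact ((measure_mono (Set.subset_univ S)).trans_eq huniv).trans_lt ENNReal.one_lt_top |>.ne
  have huniv : μ Set.univ = 1 := by
    rw [hμ, erdosOf, Measure.map_apply piMap_measurable MeasurableSet.univ,
      Set.preimage_univ, coin_univ hp]
  have hIio : μ (Set.Iio 0) = 0 := erdos_outside _ measurableSet_Iio (fun x hx => Or.inl hx)
  have hIoi : μ (Set.Ioi 1) = 0 := erdos_outside _ measurableSet_Ioi (fun x hx => Or.inr hx)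
  have h0 : μ {(0:ℝ)} = 0 := erdos_zero hp
  have h1 : μ {(1:ℝ)} = 0 := erdos_one hp
  have hcompl : μ (Set.Ioo (0:ℝ) 1)ᶜ = 0 := by
    have hsub : (Set.Ioo (0:ℝ) 1)ᶜ ⊆ Set.Iio 0 ∪ ({(0:ℝ)} ∪ ({(1:ℝ)} ∪ Set.Ioi 1)) := by
      intro x hx
      simp only [Set.mem_compl_iff, Set.mem_Ioo, not_and_or, not_lt] at hx
      simp only [Set.mem_union, Set.mem_Iio, Set.mem_singleton_iff, Set.mem_Ioi]
      rcases hx with hx | hx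
      · rcases lt_or_eq_of_le hx with h | h
        · exact Or.inl h
        · exact Or.inr (Or.inl h)
      · rcases lt_or_eq_of_le hx with h | h
        · exact Or.inr (Or.inr (Or.inr h))
        · exact Or.inr (Or.inr (Or.inl h.symm))
    exact measure_mono_null hsub
      (measure_union_null hIio (measure_union_null h0 (measure_union_null h1 hIoi)))
  have htot : μ (Set.Ioo (0:ℝ) 1) = 1 := by
    refine le_antisymm ((measure_mono (Set.subset_univ _)).trans_eq huniv) ?_
    calc (1:ℝ≥0∞) = μ Set.univ := huniv.symm
      _ = μ (Set.Ioo (0:ℝ) 1 ∪ (Set.Ioo (0:ℝ) 1)ᶜ) := by rw [Set.union_compl_self]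
      _ ≤ μ (Set.Ioo (0:ℝ) 1) + μ (Set.Ioo (0:ℝ) 1)ᶜ := measure_union_le _ _
      _ = μ (Set.Ioo (0:ℝ) 1) := by rw [hcompl, add_zero]
  -- splittings
  have s_ab : μ (Set.Ioo 0 gold⁻¹) =
      μ (Set.Ioo 0 (gold⁻¹ ^ 2)) + μ {gold⁻¹ ^ 2} + μ (Set.Ioo (gold⁻¹ ^ 2) gold⁻¹) :=
    tri_split μ hb2pos hb2b
  have s_full : μ (Set.Ioo (0:ℝ) 1) =
      μ (Set.Ioo 0 gold⁻¹) + μ {gold⁻¹} + μ (Set.Ioo gold⁻¹ 1) :=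
    tri_split μ (lt_trans hb2pos hb2b) hb1
  have s_b1 : μ (Set.Ioo (gold⁻¹ ^ 2) 1) =
      μ (Set.Ioo (gold⁻¹ ^ 2) gold⁻¹) + μ {gold⁻¹} + μ (Set.Ioo gold⁻¹ 1) :=
    tri_split μ hb2b hb1
  -- functional equations
  have e1 : μ (Set.Ioo 0 (gold⁻¹ ^ 2)) = 2⁻¹ * μ (Set.Ioo 0 gold⁻¹) := by
    have h := erdos_funEq hp (Set.Ioo 0 (gold⁻¹ ^ 2)) measurableSet_Ioo
    rw [pf1] at h
    have hz : erdosOf p ((fun x => gold⁻¹ ^ 2 + gold⁻¹ * x) ⁻¹' Set.Ioo 0 (gold⁻¹ ^ 2)) = 0 :=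
      erdos_outside _ (affine_measurable measurableSet_Ioo) (fun x hx => Or.inl (pg1 hx))
    rw [hz, mul_zero, add_zero] at h
    exact h
  have e2 : μ {gold⁻¹ ^ 2} = 2⁻¹ * μ {gold⁻¹} := by
    have h := erdos_funEq hp {gold⁻¹ ^ 2} (measurableSet_singleton _)
    rw [pf2, pg2] at h
    rw [erdos_zero hp, mul_zero, add_zero] at h
    exact h
  have e3 : μ (Set.Ioo (gold⁻¹ ^ 2) gold⁻¹) =
      2⁻¹ * μ (Set.Ioo gold⁻¹ 1) + 2⁻¹ * μ (Set.Ioo 0 (gold⁻¹ ^ 2)) := by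
    have h := erdos_funEq hp (Set.Ioo (gold⁻¹ ^ 2) gold⁻¹) measurableSet_Ioo
    rw [pf3, pg3] at h
    exact h
  have e4 : μ {gold⁻¹} = 2⁻¹ * μ {gold⁻¹ ^ 2} := by
    have h := erdos_funEq hp {gold⁻¹} (measurableSet_singleton _)
    rw [pf4, pg4] at h
    rw [erdos_one hp, mul_zero, zero_add] at h
    exact h
  have e5 : μ (Set.Ioo gold⁻¹ 1) = 2⁻¹ * μ (Set.Ioo (gold⁻¹ ^ 2) 1) := by
    have h := erdos_funEq hp (Set.Ioo gold⁻¹ 1) measurableSet_Ioo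
    rw [pg5] at h
    have hz : erdosOf p ((fun x => gold⁻¹ * x) ⁻¹' Set.Ioo gold⁻¹ 1) = 0 :=
      erdos_outside _ (mul_measurable measurableSet_Ioo) (fun x hx => Or.inr (pf5 hx))
    rw [hz, mul_zero, zero_add] at h
    exact h
  -- pass to real numbers
  have h2r : ((2:ℝ≥0∞)⁻¹).toReal = (2:ℝ)⁻¹ := by simp
  have tadd : ∀ x y : ℝ≥0∞, x ≠ ⊤ → y ≠ ⊤ → (x + y).toReal = x.toReal + y.toReal :=
    fun x y hx hy => ENNReal.toReal_add hx hy
  have E1 := congrArg ENNReal.toReal e1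
  rw [ENNReal.toReal_mul, h2r] at E1
  have E2 := congrArg ENNReal.toReal e2
  rw [ENNReal.toReal_mul, h2r] at E2
  have E3 := congrArg ENNReal.toReal e3
  rw [tadd _ _ (ENNReal.mul_ne_top (by simp) (hfin _)) (ENNReal.mul_ne_top (by simp) (hfin _)),
    ENNReal.toReal_mul, ENNReal.toReal_mul, h2r] at E3
  have E4 := congrArg ENNReal.toReal e4
  rw [ENNReal.toReal_mul, h2r] at E4
  have E5 := congrArg ENNReal.toReal e5
  rw [ENNReal.toReal_mul, h2r] at E5
  have S1 := congrArg ENNReal.toReal s_ab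
  rw [tadd _ _ (ENNReal.add_ne_top.mpr ⟨hfin _, hfin _⟩) (hfin _), tadd _ _ (hfin _) (hfin _)] at S1
  have S2 := congrArg ENNReal.toReal s_full
  rw [tadd _ _ (ENNReal.add_ne_top.mpr ⟨hfin _, hfin _⟩) (hfin _), tadd _ _ (hfin _) (hfin _)] at S2
  have S3 := congrArg ENNReal.toReal s_b1
  rw [tadd _ _ (ENNReal.add_ne_top.mpr ⟨hfin _, hfin _⟩) (hfin _), tadd _ _ (hfin _) (hfin _)] at S3
  have T := congrArg ENNReal.toReal htot
  rw [ENNReal.toReal_one] at T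
  -- solve
  have hA : (μ (Set.Ioo 0 (gold⁻¹ ^ 2))).toReal = 3⁻¹ := by linarith
  have hB : (μ (Set.Ioo (gold⁻¹ ^ 2) gold⁻¹)).toReal = 3⁻¹ := by linarith
  have hC : (μ (Set.Ioo gold⁻¹ 1)).toReal = 3⁻¹ := by linarith
  have h3 : ((3:ℝ≥0∞)⁻¹).toReal = (3:ℝ)⁻¹ := by simp
  refine ⟨?_, ?_, ?_⟩
  · exact (ENNReal.toReal_eq_toReal_iff' (hfin _) (by simp)).mp (by rw [hA, h3])
  · exact (ENNReal.toReal_eq_toReal_iff' (hfin _) (by simp)).mp (by rw [hB, h3])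
  · exact (ENNReal.toReal_eq_toReal_iff' (hfin _) (by simp)).mp (by rw [hC, h3])
end

section
/- For integers m and n, the equation m² + mn − n² = ±5 holds if and only if there exist k ∈ ℤ and a sign ε ∈ {1, −1} such that m + nλ = ε√5·λᵏ. -/
lemma sqrt5_sq : Real.sqrt 5 ^ 2 = 5 := Real.sq_sqrt (by norm_num)

lemma g_sq : gold ^ 2 = gold + 1 := by
  unfold gold
  linear_combination (1/4 : ℝ) * sqrt5_sq

lemma g_pos : 0 < gold := by
  unfold gold; positivity

lemma g_ne : gold ≠ 0 := ne_of_gt g_pos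

lemma exists_rep (k : ℤ) : ∃ a b : ℤ,
    Real.sqrt 5 * gold ^ k = (a:ℝ) + (b:ℝ) * gold ∧
    (a^2 + a*b - b^2 = 5 ∨ a^2 + a*b - b^2 = -5) := by
  induction k using Int.induction_on with
  | zero =>
    refine ⟨-1, 2, ?_, by right; ring⟩
    rw [zpow_zero]; unfold gold; push_cast; ring
  | succ k ih =>
    obtain ⟨a, b, hab, hn⟩ := ih
    refine ⟨b, a + b, ?_, ?_⟩
    · rw [zpow_add_one₀ g_ne, ← mul_assoc, hab]
      push_cast
      linear_combination (b:ℝ) * g_sq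
    · rcases hn with h | h
      · right; linear_combination -h
      · left; linear_combination -h
  | pred k ih =>
    obtain ⟨a, b, hab, hn⟩ := ih
    refine ⟨b - a, a, ?_, ?_⟩
    · rw [zpow_sub_one₀ g_ne, ← mul_assoc, hab]
      have hinv : gold⁻¹ = gold - 1 :=
        inv_eq_of_mul_eq_one_right (by linear_combination g_sq)
      rw [hinv]
      push_cast
      linear_combination (b:ℝ) * g_sq
    · rcases hn with h | h
      · right; linear_combination -h
      · left; linear_combination -h

lemma g_inv : gold⁻¹ = gold - 1 :=
  inv_eq_of_mul_eq_one_right (by linear_combination g_sq)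

lemma gold_irr : Irrational gold := by
  have h5 : Irrational (Real.sqrt 5) := by
    have : Nat.Prime 5 := by norm_num
    exact this.irrational_sqrt
  have h1 : Irrational (1 + Real.sqrt 5) := by simpa using h5.ratCast_add 1
  have := h1.div_intCast (by norm_num : (2:ℤ) ≠ 0)
  simpa [gold] using this

lemma cast_unique (a b c d : ℤ) (h : (a:ℝ) + b * gold = c + d * gold) :
    a = c ∧ b = d := by
  by_cases hbd : b = d
  · subst hbd
    have : (a:ℝ) = c := by linarith
    exact ⟨by exact_mod_cast this, rfl⟩
  · exfalso
    have hbd' : ((b:ℝ) - d) ≠ 0 := by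
      intro hh
      exact hbd (by exact_mod_cast sub_eq_zero.mp hh)
    have hg : gold = ((c:ℝ) - a) / ((b:ℝ) - d) := by
      field_simp
      linarith
    apply gold_irr
    rw [hg]
    exact ⟨((c - a : ℤ) : ℚ) / ((b - d : ℤ) : ℚ), by push_cast; ring⟩

lemma descent : ∀ N : ℕ, ∀ m n : ℤ, m^2 + n^2 ≤ (N:ℤ) →
    (m ^ 2 + m * n - n ^ 2 = 5 ∨ m ^ 2 + m * n - n ^ 2 = -5) →
    ∃ (k : ℤ) (ε : ℝ), (ε = 1 ∨ ε = -1) ∧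
      (m : ℝ) + (n : ℝ) * gold = ε * Real.sqrt 5 * gold ^ k := by
  intro N
  induction N with
  | zero =>
    intro m n hle hn
    exfalso
    norm_num at hle
    rcases hn with h | h <;>
      nlinarith [sq_nonneg m, sq_nonneg n, sq_nonneg (m+n), sq_nonneg (m-n)]
  | succ N ih =>
    intro m n hle hn
    by_cases hT : n * (n + 2*m) < 0
    · obtain ⟨k, ε, hε, h⟩ := ih n (m + n)
        (by push_cast at hle ⊢; nlinarith)
        (by rcases hn with h | h
            · right; linear_combination -h
            · left; linear_combination -h)
      refine ⟨k - 1, ε, hε, ?_⟩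
      have hmul : ((m:ℝ) + n * gold) * gold = (n:ℝ) + ((m:ℤ) + n : ℤ) * gold := by
        push_cast
        linear_combination (n:ℝ) * g_sq
      have h2 : (m:ℝ) + n * gold = (ε * Real.sqrt 5 * gold ^ k) * gold⁻¹ := by
        rw [← h, ← hmul, mul_assoc, mul_inv_cancel₀ g_ne, mul_one]
      rw [h2, zpow_sub_one₀ g_ne]
      ring
    · by_cases hS : m * (m - 2*n) < 0
      · obtain ⟨k, ε, hε, h⟩ := ih (n - m) m
          (by push_cast at hle ⊢; nlinarith)
          (by rcases hn with h | h
              · right; linear_combination -h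
              · left; linear_combination -h)
        refine ⟨k + 1, ε, hε, ?_⟩
        have hmul : (((n:ℤ) - m : ℤ) + (m:ℝ) * gold) * gold = (m:ℝ) + n * gold := by
          push_cast
          linear_combination (m:ℝ) * g_sq
        rw [← hmul, h, zpow_add_one₀ g_ne]
        ring
      · push_neg at hT hS
        have hb : m^2 + n^2 ≤ 5 := by
          rcases hn with h | h <;>
            nlinarith [sq_nonneg m, sq_nonneg n, sq_nonneg (m+n), sq_nonneg (m-n),
              sq_nonneg (m-2*n), sq_nonneg (n+2*m)]
        have hm1 : -2 ≤ m := by nlinarith [sq_nonneg n]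
        have hm2 : m ≤ 2 := by nlinarith [sq_nonneg n]
        have hn1 : -2 ≤ n := by nlinarith [sq_nonneg m]
        have hn2 : n ≤ 2 := by nlinarith [sq_nonneg m]
        interval_cases m <;> interval_cases n <;>
          first
            | (refine ⟨0, 1, Or.inl rfl, ?_⟩
               rw [zpow_zero]; unfold gold; push_cast; ring1)
            | (refine ⟨0, -1, Or.inr rfl, ?_⟩
               rw [zpow_zero]; unfold gold; push_cast; ring1)
            | (refine ⟨1, 1, Or.inl rfl, ?_⟩
               rw [zpow_one]; unfold gold; push_cast
               linear_combination (-(1/2) : ℝ) * sqrt5_sq)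
            | (refine ⟨1, -1, Or.inr rfl, ?_⟩
               rw [zpow_one]; unfold gold; push_cast
               linear_combination ((1/2) : ℝ) * sqrt5_sq)
            | (exfalso; revert hn; norm_num)

/-- `m² + mn − n² = ±5` iff `m + nλ = ±√5 · λᵏ` for some integer `k`. -/
theorem pell_characterization (m n : ℤ) :
    (m ^ 2 + m * n - n ^ 2 = 5 ∨ m ^ 2 + m * n - n ^ 2 = -5) ↔
      ∃ (k : ℤ) (ε : ℝ), (ε = 1 ∨ ε = -1) ∧
        (m : ℝ) + (n : ℝ) * gold = ε * Real.sqrt 5 * gold ^ k := by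

  constructor
  · intro hn
    exact descent (m^2 + n^2).toNat m n (Int.self_le_toNat _) hn
  · rintro ⟨k, ε, hε, h⟩
    obtain ⟨a, b, hab, hnorm⟩ := exists_rep k
    rcases hε with rfl | rfl
    · rw [one_mul, hab] at h
      obtain ⟨h1, h2⟩ := cast_unique m n a b h
      subst h1; subst h2
      exact hnorm
    · rw [mul_assoc, hab] at h
      have h' : (m:ℝ) + n * gold = ((-a : ℤ):ℝ) + ((-b : ℤ):ℝ) * gold := by
        push_cast; linarith
      obtain ⟨h1, h2⟩ := cast_unique m n (-a) (-b) h'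
      subst h1; subst h2
      have : (-a)^2 + (-a)*(-b) - (-b)^2 = a^2 + a*b - b^2 := by ring
      rw [this]
      exact hnorm
end
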